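/- arXiv:2405.04399 — 6 statements merged into one kernel-verified Lean document; each statement's English description precedes it below -/
import Mathlib

section
/- If A and B are real m×n matrices with ‖A - B‖_F ≤ h (Frobenius norm), and the largest singular values of A and B are listed in non-increasing order as ρ_1(A) ≥ ... ≥ ρ_M(A) and ρ_1(B) ≥ ... ≥ ρ_M(B) with M = min(m,n), then ∑_{k=1}^{M} (ρ_k(A) - ρ_k(B))² ≤ h². -/
open Matrix BigOperators Filter Set

noncomputable def frob {m n : ℕ} (A : Matrix (Fin m) (Fin n) ℝ) : ℝ :=
  Real.sqrt (∑ i, ∑ j, (A i j) ^ 2)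

def IsPinv {m n : ℕ} (A : Matrix (Fin m) (Fin n) ℝ) (B : Matrix (Fin n) (Fin m) ℝ) : Prop :=
  A * B * A = A ∧ B * A * B = B ∧ (A * B)ᵀ = A * B ∧ (B * A)ᵀ = B * A

def IsOrth {k : ℕ} (U : Matrix (Fin k) (Fin k) ℝ) : Prop :=
  U * Uᵀ = 1 ∧ Uᵀ * U = 1

noncomputable def svdDiag {m n : ℕ} (ρ : Fin (min m n) → ℝ) : Matrix (Fin m) (Fin n) ℝ :=
  Matrix.of fun i j => if h : (i : ℕ) = (j : ℕ) ∧ (i : ℕ) < min m n then ρ ⟨i, h.2⟩ else 0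

/-- `ρ` is the non-increasing list of singular values of `A`. -/
def HasSingularValues {m n : ℕ} (A : Matrix (Fin m) (Fin n) ℝ) (ρ : Fin (min m n) → ℝ) : Prop :=
  (∀ k, 0 ≤ ρ k) ∧ Antitone ρ ∧
    ∃ (U : Matrix (Fin m) (Fin m) ℝ) (V : Matrix (Fin n) (Fin n) ℝ), IsOrth U ∧ IsOrth V ∧ A = U * svdDiag ρ * Vᵀ

noncomputable def enorm {m : ℕ} (v : Fin m → ℝ) : ℝ :=
  Real.sqrt (∑ i, (v i) ^ 2)

/-!
Since `‖A - B‖_F² = ∑ ρ_k(A)² - 2 tr(AᵀB) + ∑ ρ_k(B)²`, it suffices to prove von Neumann's trace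
inequality `tr(AᵀB) ≤ ∑ ρ_k(A) ρ_k(B)`. For `A = U Σ_A Vᵀ` and `B = U' Σ_B V'ᵀ`, with the
orthogonal matrices `W = UᵀU'` and `Z = VᵀV'`, one gets `tr(AᵀB) = ∑_{k,l} ρ_k(A) ρ_l(B) W_kl Z_kl`,
and by AM-GM `W_kl Z_kl ≤ D_kl := (W_kl² + Z_kl²)/2`, where `D` is doubly substochastic.
Finally `∑_{k,l} a_k b_l D_kl ≤ ∑_k a_k b_k` for antitone nonnegative `a`, `b`: the first `s` rows
of `D` put mass at most `1` on each column and at most `s` in total, so the partial sums of `D b`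
are dominated by those of `b`, and Abel summation against the antitone `a` concludes.
-/

open Finset

namespace IsOrth

variable {k : ℕ} {U V : Matrix (Fin k) (Fin k) ℝ}

lemma transpose_mul (hU : IsOrth U) (hV : IsOrth V) : IsOrth (Uᵀ * V) := by
  constructor
  · rw [Matrix.transpose_mul, transpose_transpose, Matrix.mul_assoc, ← Matrix.mul_assoc V,
      hV.1, Matrix.one_mul, hU.2]
  · rw [Matrix.transpose_mul, transpose_transpose, Matrix.mul_assoc, ← Matrix.mul_assoc U,
      hU.1, Matrix.one_mul, hV.2]

lemma sum_sq_row (hU : IsOrth U) (i : Fin k) : ∑ j, U i j ^ 2 = 1 := by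
  simpa [mul_apply, sq] using congrFun (congrFun hU.1 i) i

lemma sum_sq_col (hU : IsOrth U) (j : Fin k) : ∑ i, U i j ^ 2 = 1 := by
  simpa [mul_apply, sq] using congrFun (congrFun hU.2 j) j

variable {M : ℕ} (e : Fin M ↪ Fin k)

lemma sum_sq_row_comp_le_one (hU : IsOrth U) (i : Fin k) : ∑ l, U i (e l) ^ 2 ≤ 1 := by
  rw [← hU.sum_sq_row i]
  exact (sum_map univ e fun j => U i j ^ 2).symm.le.trans
    (sum_le_univ_sum_of_nonneg fun j => sq_nonneg _)

lemma sum_sq_col_comp_le_one (hU : IsOrth U) (j : Fin k) : ∑ l, U (e l) j ^ 2 ≤ 1 := by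
  rw [← hU.sum_sq_col j]
  exact (sum_map univ e fun i => U i j ^ 2).symm.le.trans
    (sum_le_univ_sum_of_nonneg fun i => sq_nonneg _)

end IsOrth

theorem Fin.sum_mul_nonpos_of_sum_Iic_nonpos {M : ℕ} {a d : Fin M → ℝ} (ha : Antitone a)
    (ha0 : 0 ≤ a) (hd : ∀ s, ∑ k ∈ Iic s, d k ≤ 0) : ∑ k, a k * d k ≤ 0 := by
  induction M with
  | zero => simp
  | succ M ih =>
    set L := Fin.last M
    have htotal : ∑ k, d k ≤ 0 := by simpa [Finset.Iic_top] using hd ⊤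
    have hinit : ∑ k : Fin M, (a k.castSucc - a L) * d k.castSucc ≤ 0 :=
      ih (fun _ _ hkl => sub_le_sub_right (ha (Fin.castSucc_le_castSucc_iff.2 hkl)) _)
        (fun k => sub_nonneg.2 (ha (Fin.castSucc_lt_last k).le))
        (fun s => by simpa only [Fin.sum_Iic_castSucc] using hd s.castSucc)
    calc ∑ k, a k * d k
        = ∑ k : Fin M, (a k.castSucc - a L) * d k.castSucc + a L * ∑ k, d k := by
          simp only [Fin.sum_univ_castSucc, sub_mul, sum_sub_distrib, mul_add, mul_sum]
          ring
      _ ≤ 0 := add_nonpos hinit (mul_nonpos_of_nonneg_of_nonpos (ha0 L) htotal)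

theorem sum_mul_le_sum_of_sum_le_card {ι : Type*} [Fintype ι] (S : Finset ι) {b c : ι → ℝ}
    {θ : ℝ} (hθ : 0 ≤ θ) (hbS : ∀ l ∈ S, θ ≤ b l) (hbSc : ∀ l ∉ S, b l ≤ θ)
    (hc0 : ∀ l, 0 ≤ c l) (hc1 : ∀ l, c l ≤ 1) (hc : ∑ l, c l ≤ #S) :
    ∑ l, b l * c l ≤ ∑ l ∈ S, b l := by
  classical
  have hterm : ∀ l, (b l - θ) * (c l - if l ∈ S then 1 else 0) ≤ 0 := by
    intro l
    split_ifs with hl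
    · exact mul_nonpos_of_nonneg_of_nonpos (sub_nonneg.2 (hbS l hl)) (sub_nonpos.2 (hc1 l))
    · simpa using mul_nonpos_of_nonpos_of_nonneg (sub_nonpos.2 (hbSc l hl)) (hc0 l)
  have hsplit : ∑ l, (b l - θ) * (c l - if l ∈ S then 1 else 0)
      = ∑ l, b l * c l - ∑ l ∈ S, b l - θ * (∑ l, c l - #S) := by
    simp only [mul_sub, sub_mul, mul_ite, mul_one, mul_zero, sum_sub_distrib, sum_ite_mem,
      Finset.univ_inter, sum_const, nsmul_eq_mul, mul_sum]
    ring
  have := sum_nonpos (s := univ) fun l _ => hterm l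
  rw [hsplit] at this
  linarith [mul_nonneg hθ (sub_nonneg.2 hc)]

structure IsDoublySubstochastic {κ ι : Type*} [Fintype κ] [Fintype ι] (D : Matrix κ ι ℝ) :
    Prop where
  nonneg : ∀ k l, 0 ≤ D k l
  sum_row_le_one : ∀ k, ∑ l, D k l ≤ 1
  sum_col_le_one : ∀ l, ∑ k, D k l ≤ 1

theorem IsDoublySubstochastic.sum_mul_mul_le {M : ℕ} {D : Matrix (Fin M) (Fin M) ℝ}
    (hD : IsDoublySubstochastic D) {a b : Fin M → ℝ} (ha : Antitone a) (ha0 : 0 ≤ a)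
    (hb : Antitone b) (hb0 : 0 ≤ b) :
    ∑ k, ∑ l, a k * b l * D k l ≤ ∑ k, a k * b k := by
  suffices ∑ k, a k * (∑ l, b l * D k l - b k) ≤ 0 by
    simp only [mul_sub, sum_sub_distrib, mul_sum] at this
    simpa only [mul_assoc, sub_nonpos] using this
  refine Fin.sum_mul_nonpos_of_sum_Iic_nonpos ha ha0 fun s => ?_
  rw [sum_sub_distrib, sum_comm, sub_nonpos]
  simp only [← mul_sum]
  refine sum_mul_le_sum_of_sum_le_card (Iic s) (hb0 s) (fun l hl => hb (mem_Iic.1 hl))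
    (fun l hl => hb (le_of_not_ge (by simpa using hl)))
    (fun l => sum_nonneg fun k _ => hD.nonneg k l)
    (fun l => (sum_le_univ_sum_of_nonneg fun k => hD.nonneg k l).trans (hD.sum_col_le_one l)) ?_
  rw [sum_comm]
  exact (sum_le_sum fun k _ => hD.sum_row_le_one k).trans (by simp)

section SingularValueDecomposition

lemma trace_transpose_mul_eq_sum {κ ι : Type*} [Fintype κ] [Fintype ι]
    (X Y : Matrix κ ι ℝ) : trace (Xᵀ * Y) = ∑ i, ∑ j, X i j * Y i j := by
  simp only [trace, diag_apply, mul_apply, transpose_apply]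
  exact sum_comm

variable {m n : ℕ}

lemma svdDiag_castLE (ρ : Fin (min m n) → ℝ) (k : Fin (min m n)) :
    svdDiag ρ (Fin.castLE (min_le_left m n) k) (Fin.castLE (min_le_right m n) k) = ρ k :=
  dif_pos ⟨rfl, k.2⟩

lemma svdDiag_eq_sum_single (ρ : Fin (min m n) → ℝ) :
    svdDiag ρ = ∑ k, single (Fin.castLE (min_le_left m n) k) (Fin.castLE (min_le_right m n) k)
      (ρ k) := by
  ext i j
  simp only [svdDiag, of_apply, Matrix.sum_apply, single_apply, Fin.ext_iff, Fin.val_castLE]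
  split_ifs with h
  · rw [sum_eq_single_of_mem ⟨i, h.2⟩ (mem_univ _)
      fun k _ hk => if_neg fun hk' => hk (Fin.ext hk'.1)]
    exact (if_pos ⟨rfl, h.1⟩).symm
  · refine (sum_eq_zero fun k _ => if_neg ?_).symm
    rintro ⟨hki, hkj⟩
    exact h ⟨hki ▸ hkj, hki ▸ k.2⟩

lemma sum_svdDiag_mul (ρ : Fin (min m n) → ℝ) (Y : Matrix (Fin m) (Fin n) ℝ) :
    ∑ i, ∑ j, svdDiag ρ i j * Y i j
      = ∑ k, ρ k * Y (Fin.castLE (min_le_left m n) k) (Fin.castLE (min_le_right m n) k) := by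
  simp only [svdDiag_eq_sum_single, Matrix.sum_apply, single_apply, ite_mul, zero_mul, sum_mul]
  rw [sum_comm_cycle]
  simp only [ite_and, sum_ite_irrel, sum_ite_eq, Finset.mem_univ, ↓reduceIte, sum_const_zero]

lemma mul_svdDiag_mul_apply {α β : Type*} (P : Matrix α (Fin m) ℝ) (σ : Fin (min m n) → ℝ)
    (Q : Matrix (Fin n) β ℝ) (i : α) (j : β) :
    (P * svdDiag σ * Q) i j
      = ∑ l, P i (Fin.castLE (min_le_left m n) l) * σ l *
          Q (Fin.castLE (min_le_right m n) l) j := by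
  simp only [svdDiag_eq_sum_single, mul_apply, Matrix.sum_apply, single_apply, sum_mul, mul_sum,
    mul_ite, ite_mul, mul_zero, zero_mul]
  rw [sum_comm_cycle]
  simp only [ite_and, sum_ite_eq, Finset.mem_univ, ↓reduceIte]

lemma trace_transpose_mul_conj {α β γ δ : Type*} [Fintype α] [Fintype β] [Fintype γ]
    [Fintype δ] (U U' : Matrix α β ℝ) (X Y : Matrix β γ ℝ) (V V' : Matrix δ γ ℝ) :
    trace ((U * X * Vᵀ)ᵀ * (U' * Y * V'ᵀ)) =
      trace (Xᵀ * (Uᵀ * U' * Y * (Vᵀ * V')ᵀ)) := by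
  simp only [Matrix.transpose_mul, transpose_transpose, Matrix.mul_assoc]
  rw [trace_mul_comm V]
  simp only [Matrix.mul_assoc]

lemma frob_sq (X : Matrix (Fin m) (Fin n) ℝ) : frob X ^ 2 = trace (Xᵀ * X) := by
  rw [frob, Real.sq_sqrt (by positivity), trace_transpose_mul_eq_sum]
  simp only [sq]

lemma frob_sub_sq (A B : Matrix (Fin m) (Fin n) ℝ) :
    frob (A - B) ^ 2 = trace (Aᵀ * A) - 2 * trace (Aᵀ * B) + trace (Bᵀ * B) := by
  have hsymm : trace (Bᵀ * A) = trace (Aᵀ * B) := by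
    rw [← trace_transpose, Matrix.transpose_mul, transpose_transpose]
  rw [frob_sq, transpose_sub, Matrix.sub_mul, Matrix.mul_sub, Matrix.mul_sub, trace_sub, trace_sub,
    trace_sub, hsymm]
  ring

theorem IsOrth.isDoublySubstochastic_sq_add_sq {M k₁ k₂ : ℕ}
    {W : Matrix (Fin k₁) (Fin k₁) ℝ} {Z : Matrix (Fin k₂) (Fin k₂) ℝ} (hW : IsOrth W)
    (hZ : IsOrth Z) (e : Fin M ↪ Fin k₁) (f : Fin M ↪ Fin k₂) :
    IsDoublySubstochastic (Matrix.of fun k l => (W (e k) (e l) ^ 2 + Z (f k) (f l) ^ 2) / 2) where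
  nonneg k l := by simp only [of_apply]; positivity
  sum_row_le_one k := by
    simp only [of_apply, ← sum_div, sum_add_distrib]
    linarith [hW.sum_sq_row_comp_le_one e (e k), hZ.sum_sq_row_comp_le_one f (f k)]
  sum_col_le_one l := by
    simp only [of_apply, ← sum_div, sum_add_distrib]
    linarith [hW.sum_sq_col_comp_le_one e (e l), hZ.sum_sq_col_comp_le_one f (f l)]

namespace HasSingularValues

variable {A B : Matrix (Fin m) (Fin n) ℝ} {ρ ρA ρB : Fin (min m n) → ℝ}

theorem trace_transpose_mul_self (hA : HasSingularValues A ρ) :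
    trace (Aᵀ * A) = ∑ k, ρ k ^ 2 := by
  obtain ⟨-, -, U, V, hU, hV, rfl⟩ := hA
  rw [trace_transpose_mul_conj, hU.2, hV.2, transpose_one, Matrix.one_mul, Matrix.mul_one,
    trace_transpose_mul_eq_sum, sum_svdDiag_mul]
  simp only [svdDiag_castLE, sq]

theorem trace_transpose_mul_le (hA : HasSingularValues A ρA) (hB : HasSingularValues B ρB) :
    trace (Aᵀ * B) ≤ ∑ k, ρA k * ρB k := by
  obtain ⟨hρA0, hρA, U, V, hU, hV, rfl⟩ := hA
  obtain ⟨hρB0, hρB, U', V', hU', hV', rfl⟩ := hB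
  have hD := (hU.transpose_mul hU').isDoublySubstochastic_sq_add_sq (hV.transpose_mul hV')
    (Fin.castLEEmb (min_le_left m n)) (Fin.castLEEmb (min_le_right m n))
  have amgm {a b w z : ℝ} (ha : 0 ≤ a) (hb : 0 ≤ b) :
      a * (w * b * z) ≤ a * b * ((w ^ 2 + z ^ 2) / 2) := by
    nlinarith [mul_nonneg (mul_nonneg ha hb) (sq_nonneg (w - z))]
  rw [trace_transpose_mul_conj, trace_transpose_mul_eq_sum, sum_svdDiag_mul]
  simp only [mul_svdDiag_mul_apply, mul_sum, transpose_apply]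
  exact (sum_le_sum fun k _ => sum_le_sum fun l _ => amgm (hρA0 k) (hρB0 l)).trans
    (hD.sum_mul_mul_le hρA hρA0 hρB hρB0)

end HasSingularValues

end SingularValueDecomposition

theorem stmt0 {m n : ℕ} (A B : Matrix (Fin m) (Fin n) ℝ) (h : ℝ)
    (ρA ρB : Fin (min m n) → ℝ)
    (hA : HasSingularValues A ρA) (hB : HasSingularValues B ρB)
    (hab : frob (A - B) ≤ h) :
    ∑ k, (ρA k - ρB k) ^ 2 ≤ h ^ 2 := by
  calc ∑ k, (ρA k - ρB k) ^ 2
      = ∑ k, ρA k ^ 2 - 2 * ∑ k, ρA k * ρB k + ∑ k, ρB k ^ 2 := by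
        simp only [sub_sq, sum_add_distrib, sum_sub_distrib, mul_sum, mul_assoc]
    _ ≤ frob (A - B) ^ 2 := by
        rw [frob_sub_sq, hA.trace_transpose_mul_self, hB.trace_transpose_mul_self]
        linarith [hA.trace_transpose_mul_le hB]
    _ ≤ h ^ 2 := pow_le_pow_left₀ (Real.sqrt_nonneg _) hab 2
end

section
/- Let Ā be a nonzero real m×n matrix and let Ã_h be a real m×n matrix with ‖Ã_h - Ā‖ ≤ h and ‖Ã_h⁺‖ ≤ ‖Ā⁺‖ (Frobenius norms, Moore–Penrose pseudoinverses). If 0 ≤ h < ‖Ā⁺‖^{-1}, then rank(Ã_h) = rank(Ā). -/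
/-!
If `A * B * A = A`, then `B * A` is a projection whose range has dimension `rank A`. When
`rank C < rank A` this range meets `ker C` in some `x ≠ 0`, and then `x = B (A - C) x`, so
`‖x‖ ≤ ‖B‖ ‖A - C‖ ‖x‖` because the Frobenius norm bounds the operator norm. Hence
`‖A - C‖ ‖B‖ < 1` forces `rank A ≤ rank C`. Both `(Ã_h, Ã_h⁺)` against `Ā` and `(Ā, Ā⁺)`
against `Ã_h` satisfy this, since both products are at most `h ‖Ā⁺‖ < 1`.
-/

open Matrix BigOperators Filter Set

section Rank

variable {K : Type*} [Field K] {m n : Type*} [Fintype n]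

theorem Matrix.rank_mul_eq_right_of_mul_mul_eq [Fintype m] {A : Matrix m n K} {B : Matrix n m K}
    (hABA : A * B * A = A) : (B * A).rank = A.rank :=
  le_antisymm (rank_mul_le_right B A) <| by
    simpa only [← Matrix.mul_assoc, hABA] using rank_mul_le_right A (B * A)

theorem Matrix.exists_ne_zero_mem_range_mulVec_eq_zero_of_rank_lt {P : Matrix n n K}
    {C : Matrix m n K} (h : C.rank < P.rank) :
    ∃ x ≠ 0, x ∈ LinearMap.range P.mulVecLin ∧ C *ᵥ x = 0 := by
  set p := LinearMap.range P.mulVecLin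
  set q := LinearMap.ker C.mulVecLin
  have hsup : Module.finrank K ↥(p ⊔ q) ≤ Fintype.card n :=
    (Submodule.finrank_le _).trans_eq (Module.finrank_fintype_fun_eq_card K)
  have hnullity : C.rank + Module.finrank K q = Fintype.card n := by
    rw [← Module.finrank_fintype_fun_eq_card K]
    exact LinearMap.finrank_range_add_finrank_ker C.mulVecLin
  have hinf : p ⊓ q ≠ ⊥ := by
    rw [ne_eq, ← Submodule.finrank_eq_zero]
    have := Submodule.finrank_sup_add_finrank_inf_eq p q
    change C.rank < Module.finrank K p at h
    omega
  obtain ⟨x, hx, hx0⟩ := Submodule.exists_mem_ne_zero_of_ne_bot hinf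
  exact ⟨x, hx0, hx.1, hx.2⟩

theorem Matrix.exists_ne_zero_mulVec_eq_zero_of_rank_lt [Fintype m] {A C : Matrix m n K}
    {B : Matrix n m K} (hABA : A * B * A = A) (h : C.rank < A.rank) :
    ∃ x ≠ 0, C *ᵥ x = 0 ∧ B *ᵥ (A *ᵥ x) = x := by
  rw [← rank_mul_eq_right_of_mul_mul_eq hABA] at h
  obtain ⟨x, hx0, ⟨y, rfl⟩, hCx⟩ := exists_ne_zero_mem_range_mulVec_eq_zero_of_rank_lt h
  refine ⟨_, hx0, hCx, ?_⟩
  simp only [mulVecLin_apply, mulVec_mulVec, ← Matrix.mul_assoc, hABA]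

end Rank

theorem frob_nonneg {m n : ℕ} (A : Matrix (Fin m) (Fin n) ℝ) : 0 ≤ frob A :=
  Real.sqrt_nonneg _

theorem frob_sub_rev {m n : ℕ} (A C : Matrix (Fin m) (Fin n) ℝ) :
    frob (A - C) = frob (C - A) := by
  rw [← neg_sub C A]
  simp only [frob, Matrix.neg_apply, neg_sq]

theorem dotProduct_mulVec_self_le_frob_sq_mul {m n : ℕ} (M : Matrix (Fin m) (Fin n) ℝ)
    (x : Fin n → ℝ) : M *ᵥ x ⬝ᵥ M *ᵥ x ≤ frob M ^ 2 * (x ⬝ᵥ x) := by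
  rw [frob, Real.sq_sqrt (by positivity), Finset.sum_mul]
  refine Finset.sum_le_sum fun i _ => ?_
  simpa [mulVec, dotProduct, sq] using
    Finset.sum_mul_sq_le_sq_mul_sq Finset.univ (fun j => M i j) x

theorem rank_le_rank_of_frob_sub_mul_lt_one {m n : ℕ} {A C : Matrix (Fin m) (Fin n) ℝ}
    {B : Matrix (Fin n) (Fin m) ℝ} (hABA : A * B * A = A) (h : frob (A - C) * frob B < 1) :
    A.rank ≤ C.rank := by
  by_contra! hrank
  obtain ⟨x, hx0, hCx, hBAx⟩ := exists_ne_zero_mulVec_eq_zero_of_rank_lt hABA hrank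
  have hx : B *ᵥ ((A - C) *ᵥ x) = x := by rw [sub_mulVec, hCx, sub_zero, hBAx]
  have hpos : 0 < x ⬝ᵥ x := by simpa using dotProduct_self_star_pos_iff.mpr hx0
  have hsq : (frob (A - C) * frob B) ^ 2 < 1 :=
    pow_lt_one₀ (mul_nonneg (frob_nonneg _) (frob_nonneg _)) h two_ne_zero
  have hcontract : x ⬝ᵥ x ≤ (frob (A - C) * frob B) ^ 2 * (x ⬝ᵥ x) :=
    calc x ⬝ᵥ x ≤ frob B ^ 2 * ((A - C) *ᵥ x ⬝ᵥ (A - C) *ᵥ x) := by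
          simpa only [hx] using dotProduct_mulVec_self_le_frob_sq_mul B ((A - C) *ᵥ x)
      _ ≤ frob B ^ 2 * (frob (A - C) ^ 2 * (x ⬝ᵥ x)) :=
          mul_le_mul_of_nonneg_left (dotProduct_mulVec_self_le_frob_sq_mul _ x) (sq_nonneg _)
      _ = (frob (A - C) * frob B) ^ 2 * (x ⬝ᵥ x) := by ring
  exact (mul_lt_of_lt_one_left hpos hsq).not_ge hcontract

theorem stmt2_general {m n : ℕ} (Abar Ah : Matrix (Fin m) (Fin n) ℝ) (h : ℝ)
    (Bbar Bh : Matrix (Fin n) (Fin m) ℝ)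
    (hBbar : IsPinv Abar Bbar) (hBh : IsPinv Ah Bh)
    (hdist : frob (Ah - Abar) ≤ h)
    (hnorm : frob Bh ≤ frob Bbar)
    (hlt : h < (frob Bbar)⁻¹) :
    Ah.rank = Abar.rank := by
  have hpos : 0 < frob Bbar := inv_pos.mp ((frob_nonneg _).trans hdist |>.trans_lt hlt)
  have hsmall : h * frob Bbar < 1 :=
    calc h * frob Bbar < (frob Bbar)⁻¹ * frob Bbar := mul_lt_mul_of_pos_right hlt hpos
      _ = 1 := inv_mul_cancel₀ hpos.ne'
  apply le_antisymm
  · refine rank_le_rank_of_frob_sub_mul_lt_one hBh.1 (lt_of_le_of_lt ?_ hsmall)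
    exact mul_le_mul hdist hnorm (frob_nonneg _) ((frob_nonneg _).trans hdist)
  · refine rank_le_rank_of_frob_sub_mul_lt_one hBbar.1 (lt_of_le_of_lt ?_ hsmall)
    rw [frob_sub_rev]
    exact mul_le_mul_of_nonneg_right hdist hpos.le

theorem stmt2 {m n : ℕ} (Abar Ah : Matrix (Fin m) (Fin n) ℝ) (h : ℝ)
    (Bbar Bh : Matrix (Fin n) (Fin m) ℝ)
    (hA : Abar ≠ 0) (hBbar : IsPinv Abar Bbar) (hBh : IsPinv Ah Bh)
    (hdist : frob (Ah - Abar) ≤ h)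
    (hnorm : frob Bh ≤ frob Bbar)
    (h0 : 0 ≤ h) (hlt : h < (frob Bbar)⁻¹) :
    Ah.rank = Abar.rank :=
  stmt2_general Abar Ah h Bbar Bh hBbar hBh hdist hnorm hlt
end

section
/- Let Ā be a nonzero real m×n matrix and suppose (A_j) is a sequence of real m×n matrices with A_j → Ā and ‖A_j⁺‖ ≤ ‖Ā⁺‖ for all j. Then A_j⁺ → Ā⁺. -/
open Matrix BigOperators Filter Set

/-!
The `B j` stay in the compact Frobenius ball of radius `‖Ā⁺‖`. The Penrose equations are
closed conditions, so along any subsequence on which `B j` converges the limit is a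
pseudoinverse of `Ā`, hence equals `Ā⁺` by uniqueness of the pseudoinverse. A sequence in a
compact set with a single cluster point converges to it.
-/

lemma abs_apply_le_frob {m n : ℕ} (X : Matrix (Fin m) (Fin n) ℝ) (i : Fin m) (j : Fin n) :
    |X i j| ≤ frob X := by
  rw [frob, ← Real.sqrt_sq_eq_abs]
  gcongr
  calc X i j ^ 2 ≤ ∑ k, X i k ^ 2 :=
        Finset.single_le_sum (fun k _ => sq_nonneg (X i k)) (Finset.mem_univ j)
    _ ≤ ∑ l, ∑ k, X l k ^ 2 :=
        Finset.single_le_sum (f := fun l => ∑ k, X l k ^ 2)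
          (fun l _ => Finset.sum_nonneg fun k _ => sq_nonneg _) (Finset.mem_univ i)

lemma continuous_frob {m n : ℕ} : Continuous (frob : Matrix (Fin m) (Fin n) ℝ → ℝ) := by
  unfold frob
  fun_prop

lemma tendsto_frob_sub_zero_iff {m n : ℕ} {X : ℕ → Matrix (Fin m) (Fin n) ℝ}
    {Y : Matrix (Fin m) (Fin n) ℝ} :
    Tendsto (fun j => frob (X j - Y)) atTop (nhds 0) ↔ Tendsto X atTop (nhds Y) := by
  constructor
  · intro h
    refine tendsto_pi_nhds.2 fun i => tendsto_pi_nhds.2 fun k => ?_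
    rw [← tendsto_sub_nhds_zero_iff]
    exact squeeze_zero_norm (fun j => abs_apply_le_frob (X j - Y) i k) h
  · intro h
    have hsub : Tendsto (fun j => X j - Y) atTop (nhds 0) := by
      simpa using h.sub_const Y
    exact (continuous_frob.tendsto' 0 0 (by simp [frob])).comp hsub

lemma isCompact_setOf_frob_le {m n : ℕ} (c : ℝ) :
    IsCompact {X : Matrix (Fin m) (Fin n) ℝ | frob X ≤ c} := by
  have hbox : IsCompact (univ.pi fun _ : Fin m => univ.pi fun _ : Fin n => Icc (-c) c) :=
    isCompact_univ_pi fun _ => isCompact_univ_pi fun _ => isCompact_Icc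
  refine hbox.of_isClosed_subset (isClosed_le continuous_frob continuous_const) ?_
  intro X hX i _ k _
  exact abs_le.mp ((abs_apply_le_frob X i k).trans hX)

section IsPinv

variable {m n : ℕ} {A : Matrix (Fin m) (Fin n) ℝ} {B C : Matrix (Fin n) (Fin m) ℝ}

lemma IsPinv.mul_eq_mul_right (hB : IsPinv A B) (hC : IsPinv A C) : A * B = A * C :=
  calc A * B = (A * C) * (A * B) := by rw [← Matrix.mul_assoc, hC.1]
    _ = ((A * B) * (A * C))ᵀ := by rw [Matrix.transpose_mul, hB.2.2.1, hC.2.2.1]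
    _ = A * C := by rw [← Matrix.mul_assoc, hB.1, hC.2.2.1]

lemma IsPinv.mul_eq_mul_left (hB : IsPinv A B) (hC : IsPinv A C) : B * A = C * A :=
  calc B * A = (B * A) * (C * A) := by rw [Matrix.mul_assoc, ← Matrix.mul_assoc A, hC.1]
    _ = ((C * A) * (B * A))ᵀ := by rw [Matrix.transpose_mul, hB.2.2.2, hC.2.2.2]
    _ = C * A := by rw [Matrix.mul_assoc, ← Matrix.mul_assoc A, hB.1, hC.2.2.2]

lemma IsPinv.unique (hB : IsPinv A B) (hC : IsPinv A C) : B = C :=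
  calc B = B * A * B := hB.2.1.symm
    _ = C * A * C := by
      rw [hB.mul_eq_mul_left hC, Matrix.mul_assoc, hB.mul_eq_mul_right hC, ← Matrix.mul_assoc]
    _ = C := hC.2.1

lemma isClosed_setOf_isPinv :
    IsClosed {p : Matrix (Fin m) (Fin n) ℝ × Matrix (Fin n) (Fin m) ℝ | IsPinv p.1 p.2} := by
  have hfst : Continuous fun p : Matrix (Fin m) (Fin n) ℝ × Matrix (Fin n) (Fin m) ℝ => p.1 :=
    continuous_fst
  have hsnd : Continuous fun p : Matrix (Fin m) (Fin n) ℝ × Matrix (Fin n) (Fin m) ℝ => p.2 :=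
    continuous_snd
  exact (isClosed_eq ((hfst.matrix_mul hsnd).matrix_mul hfst) hfst).inter <|
    (isClosed_eq ((hsnd.matrix_mul hfst).matrix_mul hsnd) hsnd).inter <|
    (isClosed_eq (hfst.matrix_mul hsnd).matrix_transpose (hfst.matrix_mul hsnd)).inter
      (isClosed_eq (hsnd.matrix_mul hfst).matrix_transpose (hsnd.matrix_mul hfst))

end IsPinv

theorem stmt5_general {m n : ℕ} (Abar : Matrix (Fin m) (Fin n) ℝ) (Bbar : Matrix (Fin n) (Fin m) ℝ)
    (A : ℕ → Matrix (Fin m) (Fin n) ℝ) (B : ℕ → Matrix (Fin n) (Fin m) ℝ)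
    (hBbar : IsPinv Abar Bbar) (hB : ∀ j, IsPinv (A j) (B j))
    (hconv : Tendsto (fun j => frob (A j - Abar)) atTop (nhds 0))
    (hbd : ∀ j, frob (B j) ≤ frob Bbar) :
    Tendsto (fun j => frob (B j - Bbar)) atTop (nhds 0) := by
  rw [tendsto_frob_sub_zero_iff] at hconv ⊢
  refine (isCompact_setOf_frob_le (frob Bbar)).tendsto_nhds_of_unique_mapClusterPt
    (Eventually.of_forall hbd) fun X _ hX => ?_
  have : FirstCountableTopology (Matrix (Fin n) (Fin m) ℝ) :=
    inferInstanceAs (FirstCountableTopology (Fin n → Fin m → ℝ))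
  obtain ⟨ψ, hψ, hBψ⟩ := hX.tendsto_subseq
  have hXpinv : IsPinv Abar X :=
    isClosed_setOf_isPinv.mem_of_tendsto ((hconv.comp hψ.tendsto_atTop).prodMk_nhds hBψ)
      (Eventually.of_forall fun k => hB (ψ k))
  exact hXpinv.unique hBbar

theorem stmt5 {m n : ℕ} (Abar : Matrix (Fin m) (Fin n) ℝ) (Bbar : Matrix (Fin n) (Fin m) ℝ)
    (A : ℕ → Matrix (Fin m) (Fin n) ℝ) (B : ℕ → Matrix (Fin n) (Fin m) ℝ)
    (hA : Abar ≠ 0) (hBbar : IsPinv Abar Bbar) (hB : ∀ j, IsPinv (A j) (B j))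
    (hconv : Tendsto (fun j => frob (A j - Abar)) atTop (nhds 0))
    (hbd : ∀ j, frob (B j) ≤ frob Bbar) :
    Tendsto (fun j => frob (B j - Bbar)) atTop (nhds 0) :=
  stmt5_general Abar Bbar A B hBbar hB hconv hbd
end

section
/- Let Ā be a nonzero real m×n matrix and ū a vector in ℝ^m. Suppose (δ_j) → 0, (u_j) is a sequence in ℝ^m with ‖u_j - ū‖ ≤ δ_j, and (A_j) is a sequence of m×n matrices with A_j → Ā and ‖A_j⁺‖ ≤ ‖Ā⁺‖. Then A_j⁺ u_j converges to the normal pseudosolution z̄ = Ā⁺ ū. -/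
open Matrix BigOperators Filter Set

noncomputable def vecEnorm {m : ℕ} (v : Fin m → ℝ) : ℝ :=
  Real.sqrt (∑ i, (v i) ^ 2)

/-! Wedin's identity writes `B₁ - B₂`, for pseudoinverses `Bᵢ` of `Aᵢ`, as a sum of three products each
containing the factor `A₁ - A₂` or its transpose; the other factors are `B₁`, `B₂`, `1 - A₂ B₂` and
`1 - B₁ A₁`, which stay bounded under the hypothesis `‖A_j⁺‖ ≤ ‖Ā⁺‖`. Hence `A_j⁺ → Ā⁺` in norm, and
`A_j⁺ u_j - Ā⁺ ū = A_j⁺ (u_j - ū) + (A_j⁺ - Ā⁺) ū` tends to zero. -/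

attribute [local instance] Matrix.frobeniusSeminormedAddCommGroup

open WithLp

section FrobeniusNorm

variable {α : Type*} [RCLike α] {l p q r : Type*} [Fintype l] [Fintype p] [Fintype q] [Fintype r]

lemma frobenius_norm_toLp_mulVec_le (M : Matrix p q α) (v : q → α) :
    ‖toLp 2 (M *ᵥ v)‖ ≤ ‖M‖ * ‖toLp 2 v‖ := by
  simpa only [← replicateCol_mulVec, frobenius_norm_replicateCol]
    using frobenius_norm_mul M (replicateCol Unit v)

lemma frobenius_norm_mul_mul_le (M : Matrix l p α) (N : Matrix p q α) (P : Matrix q r α) :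
    ‖M * N * P‖ ≤ ‖M‖ * ‖N‖ * ‖P‖ :=
  (frobenius_norm_mul _ _).trans <| by gcongr; exact frobenius_norm_mul _ _

lemma frobenius_norm_mulVec_sub_mulVec_le (M M' : Matrix p q α) (v v' : q → α) :
    ‖toLp 2 (M *ᵥ v - M' *ᵥ v')‖ ≤ ‖M‖ * ‖toLp 2 (v - v')‖ + ‖M - M'‖ * ‖toLp 2 v'‖ := by
  have hsplit : M *ᵥ v - M' *ᵥ v' = M *ᵥ (v - v') + (M - M') *ᵥ v' := by
    rw [mulVec_sub, sub_mulVec]; abel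
  rw [hsplit, toLp_add]
  exact (norm_add_le _ _).trans
    (add_le_add (frobenius_norm_toLp_mulVec_le _ _) (frobenius_norm_toLp_mulVec_le _ _))

end FrobeniusNorm

lemma frob_eq_norm {m n : ℕ} (A : Matrix (Fin m) (Fin n) ℝ) : frob A = ‖A‖ := by
  rw [frobenius_norm_def, frob, ← Real.sqrt_eq_rpow]
  simp only [Real.norm_eq_abs, Real.rpow_two, sq_abs]

lemma vecEnorm_eq_norm {m : ℕ} (v : Fin m → ℝ) : vecEnorm v = ‖toLp 2 v‖ := by
  simp only [vecEnorm, EuclideanSpace.norm_eq, Real.norm_eq_abs, sq_abs]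

namespace IsPinv

variable {m n : ℕ} {A A₁ A₂ : Matrix (Fin m) (Fin n) ℝ} {B B₁ B₂ : Matrix (Fin n) (Fin m) ℝ}

lemma pinv_mul_pinv_transpose_mul_transpose (h : IsPinv A B) : B * Bᵀ * Aᵀ = B := by
  rw [Matrix.mul_assoc, ← transpose_mul, h.2.2.1, ← Matrix.mul_assoc, h.2.1]

lemma pinv_mul_mul_transpose (h : IsPinv A B) : B * A * Aᵀ = Aᵀ := by
  rw [← h.2.2.2, ← transpose_mul, ← Matrix.mul_assoc, h.1]

lemma transpose_mul_mul_pinv (h : IsPinv A B) : Aᵀ * (A * B) = Aᵀ := by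
  rw [← h.2.2.1, ← transpose_mul, h.1]

lemma transpose_mul_pinv_transpose_mul_pinv (h : IsPinv A B) : Aᵀ * (Bᵀ * B) = B := by
  rw [← Matrix.mul_assoc, ← transpose_mul, h.2.2.2, h.2.1]

/-- Wedin's perturbation identity for pseudoinverses. -/
lemma sub_eq (h₁ : IsPinv A₁ B₁) (h₂ : IsPinv A₂ B₂) :
    B₁ - B₂ = -(B₁ * (A₁ - A₂) * B₂) + B₁ * B₁ᵀ * (A₁ - A₂)ᵀ * (1 - A₂ * B₂)
      + (1 - B₁ * A₁) * (A₁ - A₂)ᵀ * (B₂ᵀ * B₂) := by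
  simp only [transpose_sub, Matrix.mul_sub, Matrix.sub_mul, Matrix.mul_one, Matrix.one_mul,
    ← Matrix.mul_assoc, h₁.pinv_mul_pinv_transpose_mul_transpose, h₁.pinv_mul_mul_transpose]
  simp only [Matrix.mul_assoc, h₂.transpose_mul_mul_pinv, h₂.transpose_mul_pinv_transpose_mul_pinv]
  abel

lemma norm_sub_le (h₁ : IsPinv A₁ B₁) (h₂ : IsPinv A₂ B₂) :
    ‖B₁ - B₂‖ ≤ (‖B₁‖ * ‖B₂‖ + ‖B₁‖ ^ 2 * ‖1 - A₂ * B₂‖ + ‖1 - B₁ * A₁‖ * ‖B₂‖ ^ 2)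
      * ‖A₁ - A₂‖ := by
  rw [h₁.sub_eq h₂]
  calc _ ≤ ‖B₁ * (A₁ - A₂) * B₂‖ + ‖B₁ * B₁ᵀ * (A₁ - A₂)ᵀ * (1 - A₂ * B₂)‖
        + ‖(1 - B₁ * A₁) * (A₁ - A₂)ᵀ * (B₂ᵀ * B₂)‖ := by
        rw [← norm_neg (B₁ * (A₁ - A₂) * B₂)]; exact norm_add₃_le
    _ ≤ ‖B₁‖ * ‖A₁ - A₂‖ * ‖B₂‖ + ‖B₁‖ * ‖B₁ᵀ‖ * ‖(A₁ - A₂)ᵀ‖ * ‖1 - A₂ * B₂‖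
        + ‖1 - B₁ * A₁‖ * ‖(A₁ - A₂)ᵀ‖ * (‖B₂ᵀ‖ * ‖B₂‖) := by
      gcongr ?_ + ?_ + ?_
      · exact frobenius_norm_mul_mul_le _ _ _
      · exact (frobenius_norm_mul _ _).trans (by gcongr; exact frobenius_norm_mul_mul_le _ _ _)
      · exact (frobenius_norm_mul_mul_le _ _ _).trans (by gcongr; exact frobenius_norm_mul _ _)
    _ = _ := by simp only [frobenius_norm_transpose]; ring

end IsPinv

lemma tendsto_norm_pinv_sub_of_norm_le {ι : Type*} {l : Filter ι} {m n : ℕ}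
    {A : ι → Matrix (Fin m) (Fin n) ℝ} {B : ι → Matrix (Fin n) (Fin m) ℝ}
    {Abar : Matrix (Fin m) (Fin n) ℝ} {Bbar : Matrix (Fin n) (Fin m) ℝ} {K : ℝ}
    (hB : ∀ j, IsPinv (A j) (B j)) (hBbar : IsPinv Abar Bbar) (hK : ∀ j, ‖B j‖ ≤ K)
    (hA : Tendsto (fun j => ‖A j - Abar‖) l (nhds 0)) :
    Tendsto (fun j => ‖B j - Bbar‖) l (nhds 0) := by
  set C : ℝ → ℝ := fun t => (K * ‖Bbar‖ + K ^ 2 * ‖1 - Abar * Bbar‖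
    + (‖(1 : Matrix (Fin n) (Fin n) ℝ)‖ + K * (‖Abar‖ + t)) * ‖Bbar‖ ^ 2) * t
  have hbound : ∀ j, ‖B j - Bbar‖ ≤ C ‖A j - Abar‖ := by
    intro j
    have hK0 : 0 ≤ K := (norm_nonneg _).trans (hK j)
    have hBA : ‖1 - B j * A j‖ ≤ ‖(1 : Matrix (Fin n) (Fin n) ℝ)‖ + K * (‖Abar‖ + ‖A j - Abar‖) :=
      calc ‖1 - B j * A j‖ ≤ ‖(1 : Matrix (Fin n) (Fin n) ℝ)‖ + ‖B j‖ * ‖A j‖ :=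
            (norm_sub_le _ _).trans (by gcongr; exact frobenius_norm_mul _ _)
        _ ≤ _ := by gcongr; exacts [hK j, norm_le_norm_add_norm_sub' _ _]
    refine ((hB j).norm_sub_le hBbar).trans ?_
    simp only [C]
    gcongr
    exacts [hK j, hK j]
  have hC : Tendsto C (nhds 0) (nhds 0) := by
    simpa [C] using (show Continuous C by fun_prop).tendsto 0
  exact squeeze_zero (fun _ => norm_nonneg _) hbound (hC.comp hA)

theorem stmt6_general {m n : ℕ} (Abar : Matrix (Fin m) (Fin n) ℝ) (Bbar : Matrix (Fin n) (Fin m) ℝ)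
    (ubar : Fin m → ℝ)
    (A : ℕ → Matrix (Fin m) (Fin n) ℝ) (B : ℕ → Matrix (Fin n) (Fin m) ℝ)
    (u : ℕ → (Fin m → ℝ)) (δ : ℕ → ℝ)
    (hBbar : IsPinv Abar Bbar) (hB : ∀ j, IsPinv (A j) (B j))
    (hδ : Tendsto δ atTop (nhds 0))
    (hu : ∀ j, vecEnorm (u j - ubar) ≤ δ j)
    (hconv : Tendsto (fun j => frob (A j - Abar)) atTop (nhds 0))
    (hbd : ∀ j, frob (B j) ≤ frob Bbar) :
    Tendsto (fun j => vecEnorm ((B j).mulVec (u j) - Bbar.mulVec ubar)) atTop (nhds 0) := by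
  simp only [vecEnorm_eq_norm, frob_eq_norm] at hu hconv hbd ⊢
  have hBconv := tendsto_norm_pinv_sub_of_norm_le hB hBbar hbd hconv
  refine squeeze_zero (fun _ => norm_nonneg _)
    (fun j => (frobenius_norm_mulVec_sub_mulVec_le _ _ _ _).trans ?_)
    (by simpa using (hδ.const_mul ‖Bbar‖).add (hBconv.mul_const ‖toLp 2 ubar‖))
  gcongr
  exacts [hbd j, hu j]

theorem stmt6 {m n : ℕ} (Abar : Matrix (Fin m) (Fin n) ℝ) (Bbar : Matrix (Fin n) (Fin m) ℝ)
    (ubar : Fin m → ℝ)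
    (A : ℕ → Matrix (Fin m) (Fin n) ℝ) (B : ℕ → Matrix (Fin n) (Fin m) ℝ)
    (u : ℕ → (Fin m → ℝ)) (δ : ℕ → ℝ)
    (hA : Abar ≠ 0) (hBbar : IsPinv Abar Bbar) (hB : ∀ j, IsPinv (A j) (B j))
    (hδ : Tendsto δ atTop (nhds 0))
    (hu : ∀ j, vecEnorm (u j - ubar) ≤ δ j)
    (hconv : Tendsto (fun j => frob (A j - Abar)) atTop (nhds 0))
    (hbd : ∀ j, frob (B j) ≤ frob Bbar) :
    Tendsto (fun j => vecEnorm ((B j).mulVec (u j) - Bbar.mulVec ubar)) atTop (nhds 0) :=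
  stmt6_general Abar Bbar ubar A B u δ hBbar hB hδ hu hconv hbd
end

section
/- Let r̄ ≥ 1, ρ̄_1 ≥ ... ≥ ρ̄_{r̄} > 0, and suppose x_k(h) = 1 + a_k h + o(h) as h → 0⁺ with real constants a_1 < a_2 < ... < a_{r̄}. Let h(δ) > 0 with h(δ) → 0 as δ → 0, and let r(δ) ≤ r̄ denote an index with x_{r(δ)}(h(δ)) > 0. Then for all sufficiently small δ, the ratio ν(δ) = (ρ̄_1 x_1(h(δ)))/(ρ̄_{r(δ)} x_{r(δ)}(h(δ))) satisfies ν(δ) < ρ̄_1/ρ̄_{r(δ)} ≤ ρ̄_1/ρ̄_{r̄} whenever r(δ) > 1. -/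
open Matrix BigOperators Filter Set

/-!
Since `x_k(h) = 1 + a_k h + o(h)` and `a_1 < a_k` for every `k > 1`, the difference
`(x_k(h) - x_1(h)) / h` tends to `a_k - a_1 > 0`, so `x_1(h) < x_k(h)` for all small `h > 0`.
As `h(δ) → 0⁺`, this holds at `h = h(δ)` for all small `δ`, and then
`ν(δ) = (ρ̄_1 / ρ̄_r) · (x_1 / x_r) < ρ̄_1 / ρ̄_r`; the last bound is monotonicity of `ρ̄`.
-/

open Topology

theorem eventually_lt_of_tendsto_div_sub_one {f g : ℝ → ℝ} {a b : ℝ}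
    (hf : Tendsto (fun h => (f h - 1) / h) (𝓝[>] 0) (𝓝 a))
    (hg : Tendsto (fun h => (g h - 1) / h) (𝓝[>] 0) (𝓝 b)) (hab : a < b) :
    ∀ᶠ h in 𝓝[>] 0, f h < g h := by
  have hdiff : ∀ᶠ h in 𝓝[>] (0 : ℝ), 0 < (g h - 1) / h - (f h - 1) / h :=
    (hg.sub hf).eventually_const_lt (sub_pos.2 hab)
  filter_upwards [hdiff, self_mem_nhdsWithin] with h hpos (hh : 0 < h)
  rw [div_sub_div_same, sub_sub_sub_cancel_right] at hpos
  exact sub_pos.1 ((div_pos_iff_of_pos_right hh).1 hpos)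

theorem exists_forall_Ioo_of_eventually_nhdsGT {p : ℝ → Prop} (hp : ∀ᶠ δ in 𝓝[>] 0, p δ) :
    ∃ δ0 : ℝ, 0 < δ0 ∧ ∀ δ : ℝ, 0 < δ → δ < δ0 → p δ := by
  obtain ⟨δ0, hδ0, hsub⟩ := mem_nhdsGT_iff_exists_Ioo_subset.1 hp
  exact ⟨δ0, hδ0, fun δ hδ hδδ0 => hsub ⟨hδ, hδδ0⟩⟩

theorem mul_div_mul_lt_div {c d s t : ℝ} (hc : 0 < c) (hd : 0 < d) (ht : 0 < t) (hst : s < t) :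
    c * s / (d * t) < c / d := by
  rw [mul_div_mul_comm]
  exact mul_lt_of_lt_one_right (div_pos hc hd) ((div_lt_one ht).2 hst)

theorem stmt18 (rbar : ℕ) (hr : 1 ≤ rbar)
    (ρ : Fin rbar → ℝ) (hmon : Antitone ρ) (hpos : ∀ k, 0 < ρ k)
    (a : Fin rbar → ℝ) (ha : StrictMono a)
    (x : Fin rbar → ℝ → ℝ)
    (hx : ∀ k, Tendsto (fun h => (x k h - 1) / h) (nhdsWithin 0 (Set.Ioi 0)) (nhds (a k)))
    (hfun : ℝ → ℝ) (hpos' : ∀ δ : ℝ, 0 < δ → 0 < hfun δ)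
    (hconv : Tendsto hfun (nhdsWithin 0 (Set.Ioi 0)) (nhds 0))
    (rfun : ℝ → Fin rbar)
    (hxpos : ∀ δ : ℝ, 0 < δ → 0 < x (rfun δ) (hfun δ)) :
    ∃ δ0 : ℝ, 0 < δ0 ∧ ∀ δ : ℝ, 0 < δ → δ < δ0 → (0 : ℕ) < (rfun δ : ℕ) →
      (ρ ⟨0, by omega⟩ * x ⟨0, by omega⟩ (hfun δ)) / (ρ (rfun δ) * x (rfun δ) (hfun δ))
          < ρ ⟨0, by omega⟩ / ρ (rfun δ) ∧
        ρ ⟨0, by omega⟩ / ρ (rfun δ) ≤ ρ ⟨0, by omega⟩ / ρ ⟨rbar - 1, by omega⟩ := by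
  have hfirst_lt : ∀ᶠ h in 𝓝[>] 0, ∀ k : Fin rbar, 0 < (k : ℕ) → x ⟨0, hr⟩ h < x k h := by
    refine eventually_all.2 fun k => ?_
    by_cases hk : 0 < (k : ℕ)
    · have hak : a ⟨0, hr⟩ < a k := ha (show (⟨0, hr⟩ : Fin rbar) < k from hk)
      exact (eventually_lt_of_tendsto_div_sub_one (hx _) (hx k) hak).mono fun _ hlt _ => hlt
    · exact .of_forall fun _ hk' => absurd hk' hk
  have hfun_tendsto : Tendsto hfun (𝓝[>] 0) (𝓝[>] 0) :=
    tendsto_nhdsWithin_iff.2 ⟨hconv, eventually_nhdsWithin_of_forall hpos'⟩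
  obtain ⟨δ0, hδ0, hsmall⟩ := exists_forall_Ioo_of_eventually_nhdsGT
    (hfun_tendsto.eventually hfirst_lt)
  refine ⟨δ0, hδ0, fun δ hδ hδδ0 hk => ⟨?_, ?_⟩⟩
  · exact mul_div_mul_lt_div (hpos _) (hpos _) (hxpos δ hδ) (hsmall δ hδ hδδ0 _ hk)
  · refine div_le_div_of_nonneg_left (hpos _).le (hpos _) (hmon ?_)
    exact Fin.le_def.2 (Nat.le_sub_one_of_lt (rfun δ).isLt)
end

section
/- Let ρ_1 > ρ_2 > 0 and for k = 1, 2 define x_k(h) ∈ [1, 3/2] as the solution of x⁴ - x³ = h·ρ_k^{-4} for 0 ≤ h ≤ (27/16)ρ_k⁴. Then for all h with 0 < h ≤ (27/16)ρ_2⁴ one has x_1(h) < x_2(h), and consequently (ρ_1 x_1(h))/(ρ_2 x_2(h)) < ρ_1/ρ_2. -/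
open Matrix BigOperators Filter Set

theorem strictMonoOn_pow_four_sub_pow_three :
    StrictMonoOn (fun x : ℝ => x ^ 4 - x ^ 3) (Ici (3 / 4)) := by
  refine strictMonoOn_of_deriv_pos (convex_Ici _) (by fun_prop) fun x hx => ?_
  rw [interior_Ici, mem_Ioi] at hx
  have hderiv : deriv (fun x : ℝ => x ^ 4 - x ^ 3) x = x ^ 2 * (4 * x - 3) := by
    rw [((hasDerivAt_pow 4 x).fun_sub (hasDerivAt_pow 3 x)).deriv]
    ring
  rw [hderiv]
  have hx0 : 0 < x := by linarith
  have : 0 < 4 * x - 3 := by linarith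
  positivity

theorem mul_div_mul_lt_div_s19 {a b c d : ℝ} (ha : 0 < a) (hb : 0 < b) (hc : 0 ≤ c) (hcd : c < d) :
    a * c / (b * d) < a / b := by
  have hd : 0 < d := hc.trans_lt hcd
  rw [mul_div_mul_comm]
  exact mul_lt_of_lt_one_right (div_pos ha hb) ((div_lt_one hd).2 hcd)

theorem stmt19 (ρ1 ρ2 : ℝ) (hρ2 : 0 < ρ2) (hρ : ρ2 < ρ1)
    (x1 x2 : ℝ → ℝ)
    (hx1 : ∀ h ∈ Set.Icc (0 : ℝ) (27 / 16 * ρ1 ^ 4),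
      x1 h ∈ Set.Icc (1 : ℝ) (3 / 2) ∧ (x1 h) ^ 4 - (x1 h) ^ 3 = h / ρ1 ^ 4)
    (hx2 : ∀ h ∈ Set.Icc (0 : ℝ) (27 / 16 * ρ2 ^ 4),
      x2 h ∈ Set.Icc (1 : ℝ) (3 / 2) ∧ (x2 h) ^ 4 - (x2 h) ^ 3 = h / ρ2 ^ 4) :
    ∀ h : ℝ, 0 < h → h ≤ 27 / 16 * ρ2 ^ 4 →
      x1 h < x2 h ∧ (ρ1 * x1 h) / (ρ2 * x2 h) < ρ1 / ρ2 := by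
  intro h hpos hle
  have hρ4 : ρ2 ^ 4 < ρ1 ^ 4 := pow_lt_pow_left₀ hρ hρ2.le four_ne_zero
  obtain ⟨hx1mem, hx1eq⟩ := hx1 h ⟨hpos.le, hle.trans (by linarith)⟩
  obtain ⟨hx2mem, hx2eq⟩ := hx2 h ⟨hpos.le, hle⟩
  have hlt : x1 h < x2 h := by
    refine (strictMonoOn_pow_four_sub_pow_three.lt_iff_lt ?_ ?_).1 ?_
    · exact le_trans (by norm_num) hx1mem.1
    · exact le_trans (by norm_num) hx2mem.1
    · simp only [hx1eq, hx2eq]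
      exact div_lt_div_of_pos_left hpos (by positivity) hρ4
  exact ⟨hlt, mul_div_mul_lt_div_s19 (hρ2.trans hρ) hρ2 (zero_le_one.trans hx1mem.1) hlt⟩
end
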